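/- arXiv:2410.01037 — 5 statements merged into one kernel-verified Lean document; each statement's English description precedes it below -/
import Mathlib

section
/- Let 0 < k < n be integers. A k-element subset I of {1,…,n} is a cyclic interval of length k if and only if the associated Young diagram 𝒴_I is empty, or is a rectangle with exactly k rows, or is a rectangle with exactly n−k columns. -/
private lemma sm_image_eq {k : ℕ} {f g : Fin k → ℕ} (hf : StrictMono f) (hg : StrictMono g)
    (h : Finset.image f Finset.univ = Finset.image g Finset.univ) : f = g := by
  have hcard : (Finset.image f Finset.univ).card = k := by
    rw [Finset.card_image_of_injective _ hf.injective, Finset.card_univ, Fintype.card_fin]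
  have h1 := Finset.orderEmbOfFin_unique hcard
    (f := f) (fun x => Finset.mem_image_of_mem _ (Finset.mem_univ x)) hf
  have h2 := Finset.orderEmbOfFin_unique hcard
    (f := g) (fun x => h ▸ Finset.mem_image_of_mem _ (Finset.mem_univ x)) hg
  rw [h1, h2]

private lemma sm_gap {k : ℕ} {f : Fin k → ℕ} (hf : StrictMono f) :
    ∀ t (i j : Fin k), i.val + t ≤ j.val → f i + t ≤ f j := by
  intro t
  induction t with
  | zero =>
    intro i j hij
    simpa using hf.monotone (Fin.le_def.mpr (by omega))
  | succ t ih =>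
    intro i j hij
    have hjk := j.isLt
    have hi1 : i.val + 1 < k := by omega
    have h1 : f i < f ⟨i.val + 1, hi1⟩ := hf (Fin.lt_def.mpr (by simp))
    have h2 := ih ⟨i.val + 1, hi1⟩ j (by simp only [Fin.val_mk]; omega)
    omega

/-- Let `0 < k < n`, let `a 0 < a 1 < ⋯ < a (k-1)` be the increasing enumeration of a
`k`-element subset `I` of `{1, …, n}`, and let `Y` be the associated Young diagram `𝒴_I`
(whose `i`-th row from the top, `1 ≤ i ≤ k`, has `a_{k-i+1} - (k-i+1)` cells; in `0`-indexed
form, `(r, c) ∈ Y ↔ r < k ∧ c + (k - r) < a (k-1-r)`). Then `I` is a cyclic interval of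
length `k` (an image of `{1, …, k}` under a power of the cyclic permutation
`i ↦ i + 1 mod n` of `{1, …, n}`) if and only if `Y` is empty, or a rectangle with exactly
`k` rows, or a rectangle with exactly `n - k` columns. -/
theorem cyclicInterval_iff_youngDiagram_empty_or_rectangle
    (k n : ℕ) (hk : 0 < k) (hkn : k < n)
    (a : Fin k → ℕ) (ha : StrictMono a) (ha1 : ∀ i, 1 ≤ a i) (han : ∀ i, a i ≤ n)
    (Y : YoungDiagram)
    (hY : ∀ r c : ℕ, (r, c) ∈ Y ↔ r < k ∧ c + (k - r) < a ⟨k - 1 - r, by omega⟩) :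
    (∃ d : ℕ, Finset.image a Finset.univ =
        (Finset.range k).image (fun j => (j + d) % n + 1)) ↔
      (Y.cells = ∅ ∨
        (∃ c : ℕ, 0 < c ∧ Y.cells = Finset.range k ×ˢ Finset.range c) ∨
        (∃ ρ : ℕ, 0 < ρ ∧ Y.cells = Finset.range ρ ×ˢ Finset.range (n - k))) := by
  -- bridge: values of `a` at Fin indices with equal vals
  have hval : ∀ (i : Fin k) (r : ℕ) (h : r < k), k - 1 - r = i.val →
      a i = a ⟨k - 1 - r, by omega⟩ := fun i r h he => congrArg a (Fin.ext he.symm)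
  have hlow : ∀ i : Fin k, i.val + 1 ≤ a i := by
    intro i
    have h1 := sm_gap ha i.val ⟨0, hk⟩ i (by simp)
    have h2 := ha1 ⟨0, hk⟩
    omega
  constructor
  · rintro ⟨d, hd⟩
    -- reduce to d < n
    set d' := d % n with hd'def
    have hdn : d' < n := Nat.mod_lt _ (by omega)
    replace hd : Finset.image a Finset.univ =
        Finset.image (fun i : Fin k => (i.val + d') % n + 1) Finset.univ := by
      rw [hd]
      ext x
      simp only [Finset.mem_image, Finset.mem_range, Finset.mem_univ, true_and]
      constructor
      · rintro ⟨j, hj, rfl⟩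
        exact ⟨⟨j, hj⟩, by simp [hd'def, Nat.add_mod_mod]⟩
      · rintro ⟨i, rfl⟩
        exact ⟨i.val, i.isLt, by simp [hd'def, Nat.add_mod_mod]⟩
    by_cases hcase : d' + k ≤ n
    · -- non-wrapping: a i = d' + 1 + i
      set b : Fin k → ℕ := fun i => d' + 1 + i.val with hbdef
      have hb : StrictMono b := by
        intro i j hij
        have := Fin.lt_def.mp hij
        simp only [hbdef]
        omega
      have hab : a = b := by
        apply sm_image_eq ha hb
        rw [hd]
        apply Finset.image_congr
        intro i _
        simp only [hbdef]
        rw [Nat.mod_eq_of_lt (by have := i.isLt; omega)]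
        omega
      have hcell : ∀ r c : ℕ, (r, c) ∈ Y.cells ↔ r < k ∧ c < d' := by
        intro r c
        rw [YoungDiagram.mem_cells, hY, hab]
        simp only [hbdef]
        constructor
        · rintro ⟨h1, h2⟩; exact ⟨h1, by omega⟩
        · rintro ⟨h1, h2⟩; exact ⟨h1, by omega⟩
      by_cases hd0 : d' = 0
      · left
        apply Finset.eq_empty_iff_forall_notMem.mpr
        rintro ⟨r, c⟩ hx
        rw [hcell] at hx
        omega
      · right; left
        refine ⟨d', by omega, ?_⟩
        apply Finset.ext
        rintro ⟨r, c⟩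
        simp [hcell, Finset.mem_product]
    · -- wrapping case
      push_neg at hcase
      set b : Fin k → ℕ :=
        fun i => if i.val < k + d' - n then i.val + 1 else n - k + 1 + i.val with hbdef
      have hb : StrictMono b := by
        intro i j hij
        have h1 := Fin.lt_def.mp hij
        have h2 := i.isLt
        have h3 := j.isLt
        simp only [hbdef]
        split <;> split <;> omega
      have hab : a = b := by
        apply sm_image_eq ha hb
        rw [hd]
        ext x
        simp only [Finset.mem_image, Finset.mem_univ, true_and]
        constructor
        · rintro ⟨i, rfl⟩
          have hik := i.isLt
          by_cases hc : i.val < n - d'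
          · refine ⟨⟨i.val + (k + d' - n), by omega⟩, ?_⟩
            simp only [hbdef]
            rw [if_neg (by omega)]
            rw [Nat.mod_eq_of_lt (by omega)]
            omega
          · refine ⟨⟨i.val + d' - n, by omega⟩, ?_⟩
            simp only [hbdef]
            rw [if_pos (by omega)]
            rw [Nat.mod_eq_sub_mod (by omega), Nat.mod_eq_of_lt (by omega)]
        · rintro ⟨i, rfl⟩
          have hik := i.isLt
          simp only [hbdef]
          by_cases hc : i.val < k + d' - n
          · refine ⟨⟨i.val + (n - d'), by omega⟩, ?_⟩
            rw [if_pos hc]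
            rw [Nat.mod_eq_sub_mod (by simp only [Fin.val_mk]; omega), Nat.mod_eq_of_lt (by simp only [Fin.val_mk]; omega)]
            simp only [Fin.val_mk]; omega
          · refine ⟨⟨i.val - (k + d' - n), by omega⟩, ?_⟩
            rw [if_neg hc]
            rw [Nat.mod_eq_of_lt (by simp only [Fin.val_mk]; omega)]
            simp only [Fin.val_mk]; omega
      have hcell : ∀ r c : ℕ, (r, c) ∈ Y.cells ↔ r < n - d' ∧ c < n - k := by
        intro r c
        rw [YoungDiagram.mem_cells, hY, hab]
        simp only [hbdef]
        constructor
        · rintro ⟨h1, h2⟩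
          by_cases hcc : k - 1 - r < k + d' - n
          · rw [if_pos hcc] at h2; omega
          · rw [if_neg hcc] at h2
            constructor <;> omega
        · rintro ⟨h1, h2⟩
          refine ⟨by omega, ?_⟩
          rw [if_neg (by omega)]
          omega
      right; right
      refine ⟨n - d', by omega, ?_⟩
      apply Finset.ext
      rintro ⟨r, c⟩
      simp [hcell, Finset.mem_product]
  · rintro (hcells | ⟨c, hc, hcells⟩ | ⟨ρ, hρ, hcells⟩)
    · -- empty: a i = i + 1
      have hk1 : a ⟨k - 1 - 0, by omega⟩ ≤ k := by
        by_contra h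
        push_neg at h
        have hm : (0, 0) ∈ Y := (hY 0 0).mpr ⟨hk, by omega⟩
        rw [← YoungDiagram.mem_cells, hcells] at hm
        simp at hm
      have hA : ∀ i : Fin k, a i = i.val + 1 := by
        intro i
        have h1 := hlow i
        have h2 := sm_gap ha (k - 1 - i.val) i ⟨k - 1 - 0, by omega⟩ (by simp only [Fin.val_mk]; omega)
        omega
      refine ⟨0, ?_⟩
      ext x
      simp only [Finset.mem_image, Finset.mem_univ, true_and, Finset.mem_range]
      constructor
      · rintro ⟨i, rfl⟩
        refine ⟨i.val, i.isLt, ?_⟩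
        rw [hA i, Nat.mod_eq_of_lt (by have := i.isLt; omega)]
      · rintro ⟨j, hj, rfl⟩
        refine ⟨⟨j, hj⟩, ?_⟩
        rw [hA ⟨j, hj⟩, Nat.mod_eq_of_lt (by omega)]
    · -- rectangle k × c : a i = c + i + 1
      have hA : ∀ r : ℕ, r < k → c + (k - r) = a ⟨k - 1 - r, by omega⟩ := by
        intro r hr
        have hm1 : (r, c - 1) ∈ Y := by
          rw [← YoungDiagram.mem_cells, hcells]
          simp [Finset.mem_product] <;> omega
        have hm2 : (r, c) ∉ Y := by
          rw [← YoungDiagram.mem_cells, hcells]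
          simp [Finset.mem_product] <;> omega
        rw [hY] at hm1
        rw [hY] at hm2
        omega
      have hckn : c + k ≤ n := by
        have h1 := hA 0 hk
        have h2 := han ⟨k - 1 - 0, by omega⟩
        omega
      refine ⟨c, ?_⟩
      ext x
      simp only [Finset.mem_image, Finset.mem_univ, true_and, Finset.mem_range]
      constructor
      · rintro ⟨i, rfl⟩
        have hik := i.isLt
        refine ⟨i.val, i.isLt, ?_⟩
        rw [Nat.mod_eq_of_lt (by omega)]
        have h1 := hA (k - 1 - i.val) (by omega)
        rw [← hval i (k - 1 - i.val) (by omega) (by omega)] at h1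
        omega
      · rintro ⟨j, hj, rfl⟩
        refine ⟨⟨j, hj⟩, ?_⟩
        rw [Nat.mod_eq_of_lt (by omega)]
        have h1 := hA (k - 1 - j) (by omega)
        rw [← hval ⟨j, hj⟩ (k - 1 - j) (by omega) (by simp only [Fin.val_mk]; omega)] at h1
        omega
    · -- rectangle ρ × (n - k)
      have hρk : ρ ≤ k := by
        by_contra h
        push_neg at h
        have hm : (k, 0) ∈ Y := by
          rw [← YoungDiagram.mem_cells, hcells]
          simp [Finset.mem_product] <;> omega
        rw [hY] at hm
        omega
      have hA1 : ∀ r : ℕ, r < ρ → a ⟨k - 1 - r, by omega⟩ = n - r := by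
        intro r hr
        have hm1 : (r, n - k - 1) ∈ Y := by
          rw [← YoungDiagram.mem_cells, hcells]
          simp [Finset.mem_product] <;> omega
        have hm2 : (r, n - k) ∉ Y := by
          rw [← YoungDiagram.mem_cells, hcells]
          simp [Finset.mem_product]
        rw [hY] at hm1
        rw [hY] at hm2
        have := han (⟨k - 1 - r, by omega⟩ : Fin k)
        omega
      have hA2 : ∀ r : ℕ, ρ ≤ r → r < k → a ⟨k - 1 - r, by omega⟩ = k - r := by
        intro r hr1 hr2
        have hm2 : (r, 0) ∉ Y := by
          rw [← YoungDiagram.mem_cells, hcells]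
          simp [Finset.mem_product] <;> omega
        rw [hY] at hm2
        have := hlow (⟨k - 1 - r, by omega⟩ : Fin k)
        simp at this
        omega
      refine ⟨n - ρ, ?_⟩
      ext x
      simp only [Finset.mem_image, Finset.mem_univ, true_and, Finset.mem_range]
      constructor
      · rintro ⟨i, rfl⟩
        have hik := i.isLt
        by_cases hc : i.val < k - ρ
        · -- a i = i + 1, witness j = i + ρ
          have h1 := hA2 (k - 1 - i.val) (by omega) (by omega)
          rw [← hval i (k - 1 - i.val) (by omega) (by omega)] at h1
          refine ⟨i.val + ρ, by omega, ?_⟩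
          rw [Nat.mod_eq_sub_mod (by omega), Nat.mod_eq_of_lt (by omega)]
          omega
        · -- a i = n - k + 1 + i, witness j = i - (k - ρ)
          have h1 := hA1 (k - 1 - i.val) (by omega)
          rw [← hval i (k - 1 - i.val) (by omega) (by omega)] at h1
          refine ⟨i.val - (k - ρ), by omega, ?_⟩
          rw [Nat.mod_eq_of_lt (by omega)]
          omega
      · rintro ⟨j, hj, rfl⟩
        by_cases hc : j < ρ
        · refine ⟨⟨j + (k - ρ), by omega⟩, ?_⟩
          have h1 := hA1 (ρ - 1 - j) (by omega)
          rw [← hval ⟨j + (k - ρ), by omega⟩ (ρ - 1 - j) (by omega) (by simp only [Fin.val_mk]; omega)] at h1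
          rw [Nat.mod_eq_of_lt (by omega)]
          omega
        · refine ⟨⟨j - ρ, by omega⟩, ?_⟩
          have h1 := hA2 (k - 1 - (j - ρ)) (by omega) (by omega)
          rw [← hval ⟨j - ρ, by omega⟩ (k - 1 - (j - ρ)) (by omega) (by simp only [Fin.val_mk]; omega)] at h1
          rw [Nat.mod_eq_sub_mod (by omega), Nat.mod_eq_of_lt (by omega)]
          omega
end

section
/- Fix positive integers m₁, m₂, a point (p,q) with 1 ≤ p ≤ m₁ and 1 ≤ q ≤ m₂, and natural numbers r, s, t. Then every walk starting at (p,q) whose steps are some ordering of the multiset consisting of r steps (1,0), s steps (0,1) and t steps (−1,−1) has all of its points (including the endpoint) inside the rectangle {1,…,m₁} × {1,…,m₂} if and only if r ≤ m₁ − p, s ≤ m₂ − q and t ≤ min(p,q) − 1. -/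
/-! Any prefix of an arrangement of the steps uses `i ≤ r` steps `(1, 0)`, `j ≤ s` steps `(0, 1)`
and `k ≤ t` steps `(-1, -1)`, so it ends at `(p + i - k, q + j - k)`; the extreme points are reached
by the arrangements that start with all `r`, all `s` or all `t` copies of one step, and they are
`(p + r, q)`, `(p, q + s)` and `(p - t, q - t)`. -/

namespace Multiset

variable {α : Type*}

theorem exists_eq_add_of_le_add [DecidableEq α] {N A B : Multiset α} (h : N ≤ A + B) :
    ∃ N₁ ≤ A, ∃ N₂ ≤ B, N = N₁ + N₂ :=
  ⟨N ∩ A, inter_le_right, N - A, Multiset.sub_le_iff_le_add'.2 h,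
    by rw [Multiset.add_comm, sub_add_inter]⟩

theorem exists_sum_eq_of_le_replicate_add_replicate_add_replicate [DecidableEq α]
    [AddCommMonoid α] {N : Multiset α} {x y z : α} {r s t : ℕ}
    (h : N ≤ replicate r x + replicate s y + replicate t z) :
    ∃ i ≤ r, ∃ j ≤ s, ∃ k ≤ t, N.sum = i • x + j • y + k • z := by
  obtain ⟨N₁₂, h₁₂, N₃, h₃, rfl⟩ := exists_eq_add_of_le_add h
  obtain ⟨N₁, h₁, N₂, h₂, rfl⟩ := exists_eq_add_of_le_add h₁₂
  obtain ⟨i, hi, rfl⟩ := le_replicate_iff.1 h₁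
  obtain ⟨j, hj, rfl⟩ := le_replicate_iff.1 h₂
  obtain ⟨k, hk, rfl⟩ := le_replicate_iff.1 h₃
  exact ⟨i, hi, j, hj, k, hk, by simp only [sum_add, sum_replicate]⟩

theorem exists_coe_eq_replicate_add_and_prefix (n : ℕ) (v : α) (T : Multiset α) :
    ∃ L : List α, (L : Multiset α) = replicate n v + T ∧ List.replicate n v <+: L :=
  ⟨List.replicate n v ++ T.toList, by rw [← coe_add, coe_toList, coe_replicate],
    List.prefix_append _ _⟩

end Multiset

open Multiset in
theorem walks_stay_in_rectangle_iff_general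
    (m₁ m₂ p q : ℤ) (r s t : ℕ) :
    (∀ L : List (ℤ × ℤ),
        (L : Multiset (ℤ × ℤ)) =
          Multiset.replicate r ((1 : ℤ), (0 : ℤ)) +
            Multiset.replicate s ((0 : ℤ), (1 : ℤ)) +
            Multiset.replicate t ((-1 : ℤ), (-1 : ℤ)) →
        ∀ M : List (ℤ × ℤ), M <+: L →
          (1 ≤ ((p, q) + M.sum : ℤ × ℤ).1 ∧ ((p, q) + M.sum : ℤ × ℤ).1 ≤ m₁) ∧
          (1 ≤ ((p, q) + M.sum : ℤ × ℤ).2 ∧ ((p, q) + M.sum : ℤ × ℤ).2 ≤ m₂)) ↔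
      ((r : ℤ) ≤ m₁ - p ∧ (s : ℤ) ≤ m₂ - q ∧ (t : ℤ) ≤ min p q - 1) := by
  constructor
  · intro h
    have corner (n : ℕ) (v : ℤ × ℤ) (T : Multiset (ℤ × ℤ))
        (hT : replicate n v + T = replicate r (1, 0) + replicate s (0, 1) + replicate t (-1, -1)) :
        (1 ≤ p + n * v.1 ∧ p + n * v.1 ≤ m₁) ∧ (1 ≤ q + n * v.2 ∧ q + n * v.2 ≤ m₂) := by
      obtain ⟨L, hL, hprefix⟩ := exists_coe_eq_replicate_add_and_prefix n v T
      simpa [List.sum_replicate] using h L (hL.trans hT) _ hprefix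
    have hr := corner r (1, 0) _ (add_assoc _ _ _).symm
    have hs := corner s (0, 1) (replicate r (1, 0) + replicate t (-1, -1)) (by abel)
    have ht := corner t (-1, -1) (replicate r (1, 0) + replicate s (0, 1)) (add_comm _ _)
    simp only [mul_one, mul_zero, mul_neg] at hr hs ht
    omega
  · rintro ⟨hr, hs, ht⟩ L hL M hM
    obtain ⟨i, hi, j, hj, k, hk, hsum⟩ :=
      exists_sum_eq_of_le_replicate_add_replicate_add_replicate (hL ▸ coe_le.2 hM.sublist.subperm)
    rw [← sum_coe, hsum]
    simp only [Prod.fst_add, Prod.snd_add, Prod.smul_mk, nsmul_eq_mul, mul_one,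
      mul_zero, mul_neg]
    omega

/-- Fix positive integers `m₁, m₂`, a point `(p, q)` with `1 ≤ p ≤ m₁` and `1 ≤ q ≤ m₂`,
and natural numbers `r, s, t`. Every walk starting at `(p, q)` whose steps are some
ordering of the multiset consisting of `r` steps `(1, 0)`, `s` steps `(0, 1)` and `t`
steps `(-1, -1)` has all of its points (the partial sums along every prefix, including
the starting point and the endpoint) inside the rectangle `{1, …, m₁} × {1, …, m₂}`
if and only if `r ≤ m₁ - p`, `s ≤ m₂ - q` and `t ≤ min p q - 1`. -/
theorem walks_stay_in_rectangle_iff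
    (m₁ m₂ p q : ℤ) (hm₁ : 0 < m₁) (hm₂ : 0 < m₂)
    (hp1 : 1 ≤ p) (hpm : p ≤ m₁) (hq1 : 1 ≤ q) (hqm : q ≤ m₂) (r s t : ℕ) :
    (∀ L : List (ℤ × ℤ),
        (L : Multiset (ℤ × ℤ)) =
          Multiset.replicate r ((1 : ℤ), (0 : ℤ)) +
            Multiset.replicate s ((0 : ℤ), (1 : ℤ)) +
            Multiset.replicate t ((-1 : ℤ), (-1 : ℤ)) →
        ∀ M : List (ℤ × ℤ), M <+: L →
          (1 ≤ ((p, q) + M.sum : ℤ × ℤ).1 ∧ ((p, q) + M.sum : ℤ × ℤ).1 ≤ m₁) ∧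
          (1 ≤ ((p, q) + M.sum : ℤ × ℤ).2 ∧ ((p, q) + M.sum : ℤ × ℤ).2 ≤ m₂)) ↔
      ((r : ℤ) ≤ m₁ - p ∧ (s : ℤ) ≤ m₂ - q ∧ (t : ℤ) ≤ min p q - 1) :=
  walks_stay_in_rectangle_iff_general m₁ m₂ p q r s t
end

section
/- Let 𝒜 be an abelian category, let i₁ : T₁' ⟶ T₁'' and i₂ : T₂' ⟶ T₂'' be monomorphisms, and let p₁ : T₁'' ⟶ X₁ and p₂ : T₂'' ⟶ X₂ be cokernel projections of i₁ and i₂ respectively. Assume Ext¹(T₁'', T₂') = 0; equivalently, every short exact sequence 0 → T₂' → Y → T₁'' → 0 in 𝒜 splits. Then for every morphism c : X₁ ⟶ X₂ there exist morphisms a : T₁' ⟶ T₂' and b : T₁'' ⟶ T₂'' such that i₂ ∘ a = b ∘ i₁ and c ∘ p₁ = p₂ ∘ b. -/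
open CategoryTheory CategoryTheory.Limits

/-!
The morphism `b` is a lift of `p₁ ≫ c : T₁'' ⟶ X₂` along the cokernel projection `p₂`: pulling
the extension `0 → T₂' → T₂'' → X₂ → 0` back along `p₁ ≫ c` gives an extension of `T₁''` by
`T₂'`, a section of it composed with the projection to `T₂''` is such a lift, and `a` is then
the morphism induced by `b` on the kernels.
-/

namespace CategoryTheory.IsPullback

variable {C : Type*} [Category C] [HasZeroMorphisms C]
  {P A B X K : C} {fst : P ⟶ A} {snd : P ⟶ B} {h : A ⟶ X} {p : B ⟶ X}

noncomputable def isLimitKernelForkLiftZero (sq : IsPullback fst snd h p) {i : K ⟶ B}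
    (hi : i ≫ p = 0) (hK : IsLimit (KernelFork.ofι i hi)) :
    IsLimit (KernelFork.ofι (sq.lift 0 i (by simp [hi])) (sq.lift_fst _ _ _)) :=
  have hsnd {W : C} {t : W ⟶ P} (ht : t ≫ fst = 0) : (t ≫ snd) ≫ p = 0 := by
    rw [Category.assoc, ← sq.w, reassoc_of% ht, zero_comp]
  KernelFork.IsLimit.ofι _ _ (fun _ ht => (KernelFork.IsLimit.lift' hK _ (hsnd ht)).1)
    (fun _ ht => sq.hom_ext (by simp [ht])
      (by rw [Category.assoc, sq.lift_snd]; exact (KernelFork.IsLimit.lift' hK _ (hsnd ht)).2))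
    (fun _ ht _ hu => Fork.IsLimit.hom_ext hK <| by
      rw [(KernelFork.IsLimit.lift' hK _ (hsnd ht)).2, ← hu, Category.assoc]
      exact congrArg _ (sq.lift_snd _ _ _).symm)

end CategoryTheory.IsPullback

namespace CategoryTheory.Abelian

variable {C : Type*} [Category C] [Abelian C]

theorem exists_lift_of_forall_splits {K B X A : C} (i : K ⟶ B) [Mono i] (p : B ⟶ X)
    (hi : i ≫ p = 0) (hp : IsColimit (CokernelCofork.ofπ p hi))
    (hsplit : ∀ (Y : C) (f : K ⟶ Y) (g : Y ⟶ A) (hfg : f ≫ g = 0),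
      Mono f → Nonempty (IsColimit (CokernelCofork.ofπ g hfg)) → ∃ σ : A ⟶ Y, σ ≫ g = 𝟙 A)
    (h : A ⟶ X) : ∃ b : A ⟶ B, b ≫ p = h := by
  have : Epi p := epi_of_isColimit_cofork hp
  have sq := IsPullback.of_hasPullback h p
  have hker := sq.isLimitKernelForkLiftZero hi (monoIsKernelOfCokernel _ hp :)
  obtain ⟨σ, hσ⟩ := hsplit _ _ _ _ (mono_of_isLimit_fork hker)
    ⟨epiIsCokernelOfKernel _ hker⟩
  exact ⟨σ ≫ pullback.snd h p, by rw [Category.assoc, ← pullback.condition, reassoc_of% hσ]⟩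

end CategoryTheory.Abelian

theorem lift_of_morphism_on_cokernels_general
    {𝒜 : Type*} [Category 𝒜] [Abelian 𝒜]
    {T₁' T₁'' T₂' T₂'' X₁ X₂ : 𝒜}
    (i₁ : T₁' ⟶ T₁'') (i₂ : T₂' ⟶ T₂'') [Mono i₂]
    (p₁ : T₁'' ⟶ X₁) (p₂ : T₂'' ⟶ X₂)
    (hi₁p₁ : i₁ ≫ p₁ = 0) (hi₂p₂ : i₂ ≫ p₂ = 0)
    (hp₂ : IsColimit (CokernelCofork.ofπ p₂ hi₂p₂))
    (hext : ∀ (Y : 𝒜) (f : T₂' ⟶ Y) (g : Y ⟶ T₁'') (hfg : f ≫ g = 0),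
      Mono f → Nonempty (IsColimit (CokernelCofork.ofπ g hfg)) →
        ∃ σ : T₁'' ⟶ Y, σ ≫ g = 𝟙 T₁'')
    (c : X₁ ⟶ X₂) :
    ∃ (a : T₁' ⟶ T₂') (b : T₁'' ⟶ T₂''), a ≫ i₂ = i₁ ≫ b ∧ p₁ ≫ c = b ≫ p₂ := by
  obtain ⟨b, hb⟩ := Abelian.exists_lift_of_forall_splits i₂ p₂ hi₂p₂ hp₂ hext (p₁ ≫ c)
  have hker : IsLimit (KernelFork.ofι i₂ hi₂p₂) := Abelian.monoIsKernelOfCokernel _ hp₂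
  obtain ⟨a, ha⟩ := KernelFork.IsLimit.lift' hker (i₁ ≫ b)
    (by rw [Category.assoc, hb, reassoc_of% hi₁p₁, zero_comp])
  exact ⟨a, b, ha, hb.symm⟩

/-- Fullness part of the equivalence between the fundamental domain and the ambient
category: given monomorphisms `i₁ : T₁' ⟶ T₁''` and `i₂ : T₂' ⟶ T₂''` in an abelian
category with cokernel projections `p₁ : T₁'' ⟶ X₁` and `p₂ : T₂'' ⟶ X₂`, and assuming
`Ext¹(T₁'', T₂') = 0` — expressed by the hypothesis that every short exact sequence
`0 → T₂' → Y → T₁'' → 0` splits — every morphism `c : X₁ ⟶ X₂` lifts to a morphism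
of two-term complexes: there exist `a : T₁' ⟶ T₂'` and `b : T₁'' ⟶ T₂''` with
`i₂ ∘ a = b ∘ i₁` and `c ∘ p₁ = p₂ ∘ b`. -/
theorem lift_of_morphism_on_cokernels
    {𝒜 : Type*} [Category 𝒜] [Abelian 𝒜]
    {T₁' T₁'' T₂' T₂'' X₁ X₂ : 𝒜}
    (i₁ : T₁' ⟶ T₁'') (i₂ : T₂' ⟶ T₂'') [Mono i₁] [Mono i₂]
    (p₁ : T₁'' ⟶ X₁) (p₂ : T₂'' ⟶ X₂)
    (hi₁p₁ : i₁ ≫ p₁ = 0) (hi₂p₂ : i₂ ≫ p₂ = 0)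
    (hp₁ : IsColimit (CokernelCofork.ofπ p₁ hi₁p₁))
    (hp₂ : IsColimit (CokernelCofork.ofπ p₂ hi₂p₂))
    (hext : ∀ (Y : 𝒜) (f : T₂' ⟶ Y) (g : Y ⟶ T₁'') (hfg : f ≫ g = 0),
      Mono f → Nonempty (IsColimit (CokernelCofork.ofπ g hfg)) →
        ∃ σ : T₁'' ⟶ Y, σ ≫ g = 𝟙 T₁'')
    (c : X₁ ⟶ X₂) :
    ∃ (a : T₁' ⟶ T₂') (b : T₁'' ⟶ T₂''), a ≫ i₂ = i₁ ≫ b ∧ p₁ ≫ c = b ≫ p₂ :=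
  lift_of_morphism_on_cokernels_general i₁ i₂ p₁ p₂ hi₁p₁ hi₂p₂ hp₂ hext c
end

section
/- Let 𝒜 be an abelian category, let i ≥ 1 be an integer, and suppose given short exact sequences 0 → U₁ → U₀' ⊕ T^{⊕i} → X → 0 and 0 → T* → E → T → 0 in 𝒜. If Ext¹(U₁, T*) = 0 (equivalently, every short exact sequence 0 → T* → Y → U₁ → 0 splits, and hence also every short exact sequence with kernel (T*)^{⊕i} and cokernel U₁ splits), then there exists a short exact sequence 0 → (T*)^{⊕i} ⊕ U₁ → U₀' ⊕ E^{⊕i} → X → 0. -/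
open CategoryTheory CategoryTheory.Limits

attribute [local instance] CategoryTheory.Abelian.hasFiniteBiproducts

/-- `f : A ⟶ B` and `g : B ⟶ C` form a short exact sequence `0 → A → B → C → 0`:
`f` is a monomorphism and `g` is a cokernel of `f`. -/
def IsShortExactSeq {𝒜 : Type*} [Category 𝒜] [Abelian 𝒜] {A B C : 𝒜}
    (f : A ⟶ B) (g : B ⟶ C) : Prop :=
  Mono f ∧ ∃ hfg : f ≫ g = 0, Nonempty (IsColimit (CokernelCofork.ofπ g hfg))

/-- Any map to `T` lifts through `g'` when `Ext¹(U₁, T*)` vanishes. -/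
lemma lift_of_ext_vanishing {𝒜 : Type*} [Category 𝒜] [Abelian 𝒜]
    {U₁ T Tstar E : 𝒜}
    (f' : Tstar ⟶ E) (g' : E ⟶ T) (hses' : IsShortExactSeq f' g')
    (hext : ∀ (Y : 𝒜) (u : Tstar ⟶ Y) (v : Y ⟶ U₁),
      IsShortExactSeq u v → ∃ σ : U₁ ⟶ Y, σ ≫ v = 𝟙 U₁)
    (h : U₁ ⟶ T) : ∃ t : U₁ ⟶ E, t ≫ g' = h := by
  obtain ⟨mf', hfg', ⟨hcolim'⟩⟩ := hses'
  haveI := mf'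
  haveI hEg' : Epi g' := epi_of_isColimit_cofork hcolim'
  have hkerf' : IsLimit (KernelFork.ofι f' hfg') :=
    Abelian.monoIsKernelOfCokernel (CokernelCofork.ofπ g' hfg') hcolim'
  have hu0 : f' ≫ g' = 0 ≫ h := by rw [hfg', zero_comp]
  set u : Tstar ⟶ pullback g' h := pullback.lift f' 0 hu0 with hu_def
  have hufst : u ≫ pullback.fst g' h = f' := pullback.lift_fst _ _ _
  have husnd : u ≫ pullback.snd g' h = 0 := pullback.lift_snd _ _ _
  haveI : Mono u := mono_of_mono_fac hufst
  have hker : IsLimit (KernelFork.ofι u husnd) := by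
    refine KernelFork.IsLimit.ofι' u husnd (fun {A} y hy => ?_)
    have h1 : (y ≫ pullback.fst g' h) ≫ g' = 0 := by
      rw [Category.assoc, pullback.condition, ← Category.assoc, hy, zero_comp]
    obtain ⟨l, hl⟩ := KernelFork.IsLimit.lift' hkerf' (y ≫ pullback.fst g' h) h1
    refine ⟨l, pullback.hom_ext ?_ ?_⟩
    · rw [Category.assoc, hufst]; exact hl
    · rw [Category.assoc, husnd, comp_zero, hy]
  obtain ⟨σ, hσ⟩ := hext _ u (pullback.snd g' h)
    ⟨inferInstance, husnd, ⟨Abelian.epiIsCokernelOfKernel _ hker⟩⟩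
  refine ⟨σ ≫ pullback.fst g' h, ?_⟩
  rw [Category.assoc, pullback.condition, ← Category.assoc, hσ, Category.id_comp]

/-- First case of the index transformation under mutation: given short exact sequences
`0 → U₁ → U₀' ⊕ T^{⊕i} → X → 0` and `0 → T* → E → T → 0` in an abelian category, with
`Ext¹(U₁, T*) = 0` — expressed by the hypothesis that every short exact sequence
`0 → T* → Y → U₁ → 0` splits — there is a short exact sequence
`0 → (T*)^{⊕i} ⊕ U₁ → U₀' ⊕ E^{⊕i} → X → 0`. -/
theorem mutated_resolution_of_nonneg_index_case
    {𝒜 : Type*} [Category 𝒜] [Abelian 𝒜]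
    (i : ℕ) (hi : 1 ≤ i)
    {U₁ U₀' T Tstar E X : 𝒜}
    (f : U₁ ⟶ U₀' ⊞ (⨁ fun _ : Fin i => T))
    (g : U₀' ⊞ (⨁ fun _ : Fin i => T) ⟶ X)
    (hses : IsShortExactSeq f g)
    (f' : Tstar ⟶ E) (g' : E ⟶ T) (hses' : IsShortExactSeq f' g')
    (hext : ∀ (Y : 𝒜) (u : Tstar ⟶ Y) (v : Y ⟶ U₁),
      IsShortExactSeq u v → ∃ σ : U₁ ⟶ Y, σ ≫ v = 𝟙 U₁) :
    ∃ (α : (⨁ fun _ : Fin i => Tstar) ⊞ U₁ ⟶ U₀' ⊞ (⨁ fun _ : Fin i => E))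
      (β : U₀' ⊞ (⨁ fun _ : Fin i => E) ⟶ X),
      IsShortExactSeq α β := by
  obtain ⟨mf, hfg, ⟨hcolim⟩⟩ := hses
  obtain ⟨mf', hfg', ⟨hcolim'⟩⟩ := hses'
  haveI := mf; haveI := mf'
  haveI hEg : Epi g := epi_of_isColimit_cofork hcolim
  haveI hEg' : Epi g' := epi_of_isColimit_cofork hcolim'
  have hkerf : IsLimit (KernelFork.ofι f hfg) :=
    Abelian.monoIsKernelOfCokernel (CokernelCofork.ofπ g hfg) hcolim
  have hkerf' : IsLimit (KernelFork.ofι f' hfg') :=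
    Abelian.monoIsKernelOfCokernel (CokernelCofork.ofπ g' hfg') hcolim'
  -- the maps
  set q : (⨁ fun _ : Fin i => E) ⟶ (⨁ fun _ : Fin i => T) :=
    biproduct.map (fun _ => g') with hq_def
  set p : U₀' ⊞ (⨁ fun _ : Fin i => E) ⟶ U₀' ⊞ (⨁ fun _ : Fin i => T) :=
    biprod.map (𝟙 U₀') q with hp_def
  set k : (⨁ fun _ : Fin i => Tstar) ⟶ U₀' ⊞ (⨁ fun _ : Fin i => E) :=
    biproduct.map (fun _ => f') ≫ biprod.inr with hk_def
  haveI : Mono k := by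
    rw [hk_def]
    exact mono_comp _ _
  -- `k` composed with `p` vanishes
  have hmapq : (biproduct.map fun _ : Fin i => f') ≫ q = 0 := by
    apply biproduct.hom_ext
    intro j
    simp [hq_def, hfg']
  have hkp : k ≫ p = 0 := by
    apply biprod.hom_ext
    · simp [hk_def, hp_def]
    · simp only [hk_def, hp_def, Category.assoc, biprod.map_snd, zero_comp]
      rw [← Category.assoc biprod.inr, biprod.inr_snd, Category.id_comp]
      exact hmapq
  -- `k` is the kernel of `p`
  have hkerk : IsLimit (KernelFork.ofι k hkp) := by
    refine KernelFork.IsLimit.ofι' k hkp (fun {A} y hy => ?_)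
    have hyfst : y ≫ biprod.fst = 0 := by
      have := hy =≫ biprod.fst
      rwa [Category.assoc, hp_def, biprod.map_fst, Category.comp_id, zero_comp] at this
    have hysnd : ∀ j, (y ≫ biprod.snd ≫ biproduct.π _ j) ≫ g' = 0 := by
      intro j
      have := hy =≫ (biprod.snd ≫ biproduct.π _ j)
      rw [Category.assoc, ← Category.assoc p, hp_def, biprod.map_snd, Category.assoc, hq_def,
        biproduct.map_π, zero_comp] at this
      simpa using this
    have w : ∀ j, { l : A ⟶ Tstar // l ≫ f' = y ≫ biprod.snd ≫ biproduct.π _ j } :=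
      fun j => KernelFork.IsLimit.lift' hkerf' _ (hysnd j)
    refine ⟨biproduct.lift (fun j => (w j).1), ?_⟩
    apply biprod.hom_ext
    · rw [Category.assoc, hk_def, Category.assoc, biprod.inr_fst, comp_zero, hyfst, comp_zero]
    · rw [Category.assoc, hk_def, Category.assoc, biprod.inr_snd, Category.comp_id]
      apply biproduct.hom_ext
      intro j
      rw [Category.assoc, biproduct.map_π, ← Category.assoc, biproduct.lift_π]
      simpa using (w j).2
  -- the section `s : U₁ ⟶ U₀' ⊞ E^{⊕i}` with `s ≫ p = f`
  have key := lift_of_ext_vanishing f' g' ⟨mf', hfg', ⟨hcolim'⟩⟩ hext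
  have hts : ∀ j : Fin i, { t : U₁ ⟶ E // t ≫ g' = f ≫ biprod.snd ≫ biproduct.π _ j } :=
    fun j => Classical.indefiniteDescription _ (key (f ≫ biprod.snd ≫ biproduct.π _ j))
  set s : U₁ ⟶ U₀' ⊞ (⨁ fun _ : Fin i => E) :=
    biprod.lift (f ≫ biprod.fst) (biproduct.lift (fun j => (hts j).1)) with hs_def
  have hsp : s ≫ p = f := by
    apply biprod.hom_ext
    · rw [Category.assoc, hp_def, biprod.map_fst, ← Category.assoc, hs_def, biprod.lift_fst,
        Category.comp_id]
    · rw [Category.assoc, hp_def, biprod.map_snd, ← Category.assoc, hs_def, biprod.lift_snd]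
      apply biproduct.hom_ext
      intro j
      rw [Category.assoc, hq_def, biproduct.map_π, ← Category.assoc, biproduct.lift_π]
      simpa using (hts j).2
  -- the two maps of the new short exact sequence
  refine ⟨biprod.desc k s, p ≫ g, ?_⟩
  set α : (⨁ fun _ : Fin i => Tstar) ⊞ U₁ ⟶ U₀' ⊞ (⨁ fun _ : Fin i => E) :=
    biprod.desc k s with hα_def
  have hαdec : α = biprod.fst ≫ k + biprod.snd ≫ s := by
    rw [hα_def, biprod.desc_eq]
  have hαβ : α ≫ (p ≫ g) = 0 := by
    apply biprod.hom_ext'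
    · rw [← Category.assoc, hα_def, biprod.inl_desc, ← Category.assoc, hkp, zero_comp, comp_zero]
    · rw [← Category.assoc, hα_def, biprod.inr_desc, ← Category.assoc, hsp, hfg, comp_zero]
  haveI : Mono α := by
    apply Preadditive.mono_of_cancel_zero
    intro A m hm
    have hmp : m ≫ (biprod.fst ≫ k + biprod.snd ≫ s) ≫ p = 0 := by
      rw [← Category.assoc, ← hαdec, hm, zero_comp]
    simp only [Preadditive.add_comp, Preadditive.comp_add, Category.assoc, hkp, hsp,
      comp_zero, zero_add] at hmp
    rw [← Category.assoc] at hmp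
    have hb0 : m ≫ biprod.snd = 0 := zero_of_comp_mono f hmp
    rw [hαdec] at hm
    rw [Preadditive.comp_add, ← Category.assoc m biprod.fst k, ← Category.assoc m biprod.snd s,
      hb0, zero_comp, add_zero] at hm
    have ha0 : m ≫ biprod.fst = 0 := zero_of_comp_mono k hm
    apply biprod.hom_ext
    · rw [ha0, zero_comp]
    · rw [hb0, zero_comp]
  -- α is the kernel of β = p ≫ g
  have hkerα : IsLimit (KernelFork.ofι α hαβ) := by
    refine KernelFork.IsLimit.ofι' α hαβ (fun {A} y hy => ?_)
    have h1 : (y ≫ p) ≫ g = 0 := by rw [Category.assoc]; exact hy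
    obtain ⟨w, hw⟩ := KernelFork.IsLimit.lift' hkerf (y ≫ p) h1
    have hz : (y - w ≫ s) ≫ p = 0 := by
      rw [Preadditive.sub_comp, Category.assoc, hsp]
      simp only [Fork.ι_ofι] at hw
      rw [hw, sub_self]
    obtain ⟨u, hu⟩ := KernelFork.IsLimit.lift' hkerk (y - w ≫ s) hz
    simp only [Fork.ι_ofι] at hu hw
    refine ⟨biprod.lift u w, ?_⟩
    rw [hα_def, biprod.lift_desc, hu]
    abel
  haveI : Epi (p ≫ g) := epi_comp _ _
  exact ⟨inferInstance, hαβ, ⟨Abelian.epiIsCokernelOfKernel _ hkerα⟩⟩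
end

section
/- Let 𝒜 be an abelian category, let i ≥ 1 be an integer, and suppose given short exact sequences 0 → U₁' ⊕ T^{⊕i} → U₀ → X → 0 and 0 → T → E' → T* → 0 in 𝒜. If Ext¹(T*, U₀) = 0 (equivalently, every short exact sequence 0 → U₀ → Y → T* → 0 splits, and hence also every short exact sequence with kernel U₀ and cokernel (T*)^{⊕i} splits), then there exists a short exact sequence 0 → U₁' ⊕ (E')^{⊕i} → U₀ ⊕ (T*)^{⊕i} → X → 0. -/
open CategoryTheory CategoryTheory.Limits

attribute [local instance] CategoryTheory.Abelian.hasFiniteBiproducts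

/-- If `f` is mono with cokernel `g`, any `v` with `v ≫ g = 0` factors through `f`. -/
lemma factor_of_comp_zero' {𝒜 : Type*} [Category 𝒜] [Abelian 𝒜]
    {A B C' W : 𝒜} {f : A ⟶ B} {g : B ⟶ C'} (hm : Mono f) (hfg : f ≫ g = 0)
    (hcol : IsColimit (CokernelCofork.ofπ g hfg)) {v : W ⟶ B} (hv : v ≫ g = 0) :
    ∃ v' : W ⟶ A, v' ≫ f = v := by
  haveI := hm
  obtain ⟨l, hl⟩ := KernelFork.IsLimit.lift'
    (Abelian.monoIsKernelOfCokernel _ hcol) v (by simpa using hv)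
  exact ⟨l, by simpa using hl⟩

/-- Given a short exact sequence `0 → T → E' → T* → 0` such that every extension of `T*` by
`U₀` splits, any morphism `t : T ⟶ U₀` extends along `f' : T ⟶ E'`. -/
lemma exists_lift_of_splits {𝒜 : Type*} [Category 𝒜] [Abelian 𝒜]
    {T E' Tstar U₀ : 𝒜} (f' : T ⟶ E') (g' : E' ⟶ Tstar)
    (hses' : IsShortExactSeq f' g') (t : T ⟶ U₀)
    (hext : ∀ (Y : 𝒜) (u : U₀ ⟶ Y) (v : Y ⟶ Tstar),
      IsShortExactSeq u v → ∃ σ : Tstar ⟶ Y, σ ≫ v = 𝟙 Tstar) :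
    ∃ e : E' ⟶ U₀, f' ≫ e = t := by
  obtain ⟨hm', hz', ⟨hc'⟩⟩ := hses'
  haveI : Mono f' := hm'
  let P := pushout t f'
  let u : U₀ ⟶ P := pushout.inl t f'
  let j : E' ⟶ P := pushout.inr t f'
  have hv0 : t ≫ (0 : U₀ ⟶ Tstar) = f' ≫ g' := by rw [hz', comp_zero]
  let v : P ⟶ Tstar := pushout.desc 0 g' hv0
  have huv : u ≫ v = 0 := pushout.inl_desc _ _ _
  have hjv : j ≫ v = g' := pushout.inr_desc _ _ _
  have hepi_g' : Epi g' := epi_of_isColimit_cofork hc'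
  haveI hepi_v : Epi v := epi_of_epi_fac hjv
  have hmono_u : Mono u := by
    dsimp only [u]
    infer_instance
  have hcond : t ≫ u = f' ≫ j := pushout.condition
  have hcol : IsColimit (CokernelCofork.ofπ v huv) := by
    refine CokernelCofork.IsColimit.ofπ' v huv (fun {A} k hk => ?_)
    have hfk : f' ≫ (j ≫ k) = 0 := by
      rw [← Category.assoc, ← hcond, Category.assoc, hk, comp_zero]
    obtain ⟨l, hl⟩ := CokernelCofork.IsColimit.desc' hc' (j ≫ k) hfk
    have hl' : g' ≫ l = j ≫ k := by simpa using hl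
    refine ⟨l, ?_⟩
    apply pushout.hom_ext
    · show u ≫ v ≫ l = u ≫ k
      rw [← Category.assoc, huv, zero_comp, hk]
    · show j ≫ v ≫ l = j ≫ k
      rw [← Category.assoc, hjv, hl']
  obtain ⟨σ, hσ⟩ := hext P u v ⟨hmono_u, huv, ⟨hcol⟩⟩
  have h1 : (𝟙 P - v ≫ σ) ≫ v = 0 := by
    simp [Preadditive.sub_comp, Category.assoc, hσ]
  obtain ⟨r, hr⟩ := KernelFork.IsLimit.lift'
    (Abelian.monoIsKernelOfCokernel _ hcol) (𝟙 P - v ≫ σ) (by simpa using h1)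
  have hr' : r ≫ u = 𝟙 P - v ≫ σ := by simpa using hr
  have hur : u ≫ r = 𝟙 U₀ := by
    haveI := hmono_u
    rw [← cancel_mono u]
    rw [Category.assoc, hr', Preadditive.comp_sub, Category.comp_id, Category.id_comp,
      ← Category.assoc, huv, zero_comp, sub_zero]
  refine ⟨j ≫ r, ?_⟩
  rw [← Category.assoc, ← hcond, Category.assoc, hur, Category.comp_id]

/-- Second case of the index transformation under mutation: given short exact sequences
`0 → U₁' ⊕ T^{⊕i} → U₀ → X → 0` and `0 → T → E' → T* → 0` in an abelian category, with
`Ext¹(T*, U₀) = 0` — expressed by the hypothesis that every short exact sequence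
`0 → U₀ → Y → T* → 0` splits — there is a short exact sequence
`0 → U₁' ⊕ (E')^{⊕i} → U₀ ⊕ (T*)^{⊕i} → X → 0`. -/
theorem mutated_resolution_of_nonpos_index_case
    {𝒜 : Type*} [Category 𝒜] [Abelian 𝒜]
    (i : ℕ) (hi : 1 ≤ i)
    {U₁' U₀ T Tstar E' X : 𝒜}
    (f : U₁' ⊞ (⨁ fun _ : Fin i => T) ⟶ U₀)
    (g : U₀ ⟶ X)
    (hses : IsShortExactSeq f g)
    (f' : T ⟶ E') (g' : E' ⟶ Tstar) (hses' : IsShortExactSeq f' g')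
    (hext : ∀ (Y : 𝒜) (u : U₀ ⟶ Y) (v : Y ⟶ Tstar),
      IsShortExactSeq u v → ∃ σ : Tstar ⟶ Y, σ ≫ v = 𝟙 Tstar) :
    ∃ (α : U₁' ⊞ (⨁ fun _ : Fin i => E') ⟶ U₀ ⊞ (⨁ fun _ : Fin i => Tstar))
      (β : U₀ ⊞ (⨁ fun _ : Fin i => Tstar) ⟶ X),
      IsShortExactSeq α β := by
  classical
  obtain ⟨hmf, hfg, ⟨hcg⟩⟩ := hses
  obtain ⟨hmf', hf'g', ⟨hcg'⟩⟩ := id hses'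
  haveI : Mono f := hmf
  haveI : Mono f' := hmf'
  have hepi_g : Epi g := epi_of_isColimit_cofork hcg
  have hepi_g' : Epi g' := epi_of_isColimit_cofork hcg'
  -- lifts of the components T → U₀ along f'
  have heex : ∀ k : Fin i, ∃ e : E' ⟶ U₀,
      f' ≫ e = biproduct.ι (fun _ : Fin i => T) k ≫ biprod.inr ≫ f :=
    fun k => exists_lift_of_splits f' g' hses' _ hext
  choose e he using heex
  -- factorizations of e k ≫ g through g'
  have hwex : ∀ k : Fin i, ∃ w : Tstar ⟶ X, g' ≫ w = e k ≫ g := by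
    intro k
    have h0 : f' ≫ e k ≫ g = 0 := by
      rw [← Category.assoc, he k]
      simp [hfg]
    obtain ⟨w, hw⟩ := CokernelCofork.IsColimit.desc' hcg' (e k ≫ g) h0
    exact ⟨w, by simpa using hw⟩
  choose w hw using hwex
  -- the morphisms
  let α : U₁' ⊞ (⨁ fun _ : Fin i => E') ⟶ U₀ ⊞ (⨁ fun _ : Fin i => Tstar) :=
    biprod.desc (biprod.inl ≫ f ≫ biprod.inl)
      (biproduct.desc fun k =>
        biprod.lift (e k) (g' ≫ biproduct.ι (fun _ : Fin i => Tstar) k))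
  let β : U₀ ⊞ (⨁ fun _ : Fin i => Tstar) ⟶ X :=
    biprod.desc g (biproduct.desc fun k => -(w k))
  have hβinl : biprod.inl ≫ β = g := biprod.inl_desc _ _
  haveI hepi_β : Epi β := epi_of_epi_fac hβinl
  -- α ≫ β = 0
  have hz : α ≫ β = 0 := by
    apply biprod.hom_ext'
    · simp [α, β, hfg]
    · apply biproduct.hom_ext'
      intro k
      simp [α, β, biprod.lift_desc, hw k]
  -- component computations for α
  have hαsnd : α ≫ biprod.snd = biprod.snd ≫ biproduct.map (fun _ : Fin i => g') := by
    apply biprod.hom_ext'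
    · simp [α]
    · apply biproduct.hom_ext'
      intro k
      simp [α, biproduct.ι_map]
  have hαfst : α ≫ biprod.fst = biprod.desc (biprod.inl ≫ f) (biproduct.desc e) := by
    apply biprod.hom_ext'
    · simp [α]
    · apply biproduct.hom_ext'
      intro k
      simp [α]
  have hmapdesc : biproduct.map (fun _ : Fin i => f') ≫ biproduct.desc e
      = biprod.inr ≫ f := by
    apply biproduct.hom_ext'
    intro k
    simp [biproduct.ι_map_assoc, he k]
  -- α is mono
  have hmono : Mono α := by
    apply Preadditive.mono_of_cancel_zero
    intro W z hz0
    have hB : (z ≫ biprod.snd) ≫ biproduct.map (fun _ : Fin i => g') = 0 := by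
      rw [Category.assoc, ← hαsnd, ← Category.assoc, hz0, zero_comp]
    have hvk : ∀ k : Fin i,
        (z ≫ biprod.snd ≫ biproduct.π (fun _ : Fin i => E') k) ≫ g' = 0 := by
      intro k
      have h2 := congrArg (· ≫ biproduct.π (fun _ : Fin i => Tstar) k) hB
      simpa [biproduct.map_π] using h2
    choose vk' hvk' using fun k => factor_of_comp_zero' hmf' hf'g' hcg' (hvk k)
    let v' : W ⟶ ⨁ (fun _ : Fin i => T) := biproduct.lift vk'
    have hv'map : v' ≫ biproduct.map (fun _ : Fin i => f') = z ≫ biprod.snd := by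
      apply biproduct.hom_ext
      intro k
      simpa [v', biproduct.map_π] using hvk' k
    have hA : z ≫ biprod.desc (biprod.inl ≫ f) (biproduct.desc e) = 0 := by
      rw [← hαfst, ← Category.assoc, hz0, zero_comp]
    have hA' : biprod.lift (z ≫ biprod.fst) v' ≫ f = 0 := by
      have h3 : v' ≫ biprod.inr ≫ f = z ≫ biprod.snd ≫ biproduct.desc e := by
        rw [← hmapdesc, ← Category.assoc, hv'map, Category.assoc]
      have h4 := hA
      rw [biprod.desc_eq, Preadditive.comp_add] at h4
      rw [biprod.lift_eq, Preadditive.add_comp]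
      simp only [Category.assoc] at h4 ⊢
      rw [h3]
      exact h4
    have hlift0 : biprod.lift (z ≫ biprod.fst) v' = 0 := by
      haveI := hmf
      rw [← cancel_mono f, zero_comp, hA']
    have hu0 : z ≫ biprod.fst = 0 := by
      have h4 := congrArg (· ≫ biprod.fst) hlift0
      simpa using h4
    have hv'0 : v' = 0 := by
      have h4 := congrArg (· ≫ biprod.snd) hlift0
      simpa using h4
    have hs0 : z ≫ biprod.snd = 0 := by
      rw [← hv'map, hv'0, zero_comp]
    apply biprod.hom_ext
    · simpa using hu0
    · simpa using hs0
  -- β is a cokernel of α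
  have hcolβ : IsColimit (CokernelCofork.ofπ β hz) := by
    refine CokernelCofork.IsColimit.ofπ' β hz (fun {A} q hq => ?_)
    have hq1 : biprod.inl ≫ f ≫ biprod.inl ≫ q = 0 := by
      have h5 : (biprod.inl : U₁' ⟶ _) ≫ α ≫ q = 0 := by rw [hq, comp_zero]
      simpa [α, Category.assoc] using h5
    have hq2 : ∀ k : Fin i,
        e k ≫ biprod.inl ≫ q
          + g' ≫ biproduct.ι (fun _ : Fin i => Tstar) k ≫ biprod.inr ≫ q = 0 := by
      intro k
      have h5 : biproduct.ι (fun _ : Fin i => E') k ≫ biprod.inr ≫ α ≫ q = 0 := by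
        rw [hq]; simp
      simpa [α, biprod.lift_eq, Preadditive.add_comp, Category.assoc] using h5
    have hfq : f ≫ biprod.inl ≫ q = 0 := by
      apply biprod.hom_ext'
      · simpa [Category.assoc] using hq1
      · apply biproduct.hom_ext'
        intro k
        have h6 := congrArg (f' ≫ ·) (hq2 k)
        simp only [Preadditive.comp_add, comp_zero] at h6
        rw [← Category.assoc f' (e k), he k] at h6
        rw [← Category.assoc f' g', hf'g', zero_comp, add_zero] at h6
        simpa [Category.assoc] using h6
    obtain ⟨r, hr⟩ := CokernelCofork.IsColimit.desc' hcg (biprod.inl ≫ q) hfq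
    have hr' : g ≫ r = biprod.inl ≫ q := by simpa using hr
    refine ⟨r, ?_⟩
    apply biprod.hom_ext'
    · rw [← Category.assoc, hβinl, hr']
    · apply biproduct.hom_ext'
      intro k
      have : biproduct.ι (fun _ : Fin i => Tstar) k ≫ biprod.inr ≫ β ≫ r
          = (-(w k)) ≫ r := by simp [β]
      rw [this, ← cancel_epi g']
      have h7 : g' ≫ (-(w k)) ≫ r = -(e k ≫ g ≫ r) := by
        rw [Preadditive.neg_comp, Preadditive.comp_neg, ← Category.assoc, hw k, Category.assoc]
      rw [h7, hr']
      have h8 := hq2 k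
      rw [add_eq_zero_iff_eq_neg] at h8
      rw [h8, neg_neg]
  exact ⟨α, β, hmono, hz, ⟨hcolβ⟩⟩
end
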